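/- Let X be a second countable, locally compact Hausdorff space and A a separable C*-algebra that is finite for projections. Let a be a positive element of C₀(X,A) such that for every x ∈ X the spectrum of a(x) is contained in {0} ∪ [δ, ∞) for some δ > 0 depending on x, and such that the Murray–von Neumann class of the support projection is locally constant: every x ∈ X has a neighbourhood V such that χ(a(y)) ~ χ(a(x)) for all y ∈ V. Then the map x ↦ χ(a(x)) is a continuous map from X to the projections of A. -/

import Mathlib

/-!
Fix `x` and a spectral gap `δ` of `a x`. The functional calculus of `a` with a continuous
`f` vanishing at `0` and equal to `1` on `[δ, ∞)` gives `b ∈ C₀(X, A)` with `b x = P x`.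
For `y` near `x`, `b y` is close to the projection `P x`, hence almost idempotent, so its
spectrum clusters near `0` and `1` and a spectral projection `q` of `b y` is close to `P x`.
As `q` lies in the C⋆-algebra generated by `a y`, `q ≤ P y`. Close projections are
Murray–von Neumann equivalent (polar decomposition of `q * P x`), so `q ~ P x ~ P y`, and
finiteness forces `q = P y`; thus `P y` is close to `P x`.
-/

open scoped ZeroAtInfty

/-- A projection in a C*-algebra: a self-adjoint idempotent. -/
def IsProjectionElem {A : Type*} [Mul A] [Star A] (e : A) : Prop :=
  star e = e ∧ e * e = e

/-- Murray–von Neumann equivalence of projections. -/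
def MvNEquiv {A : Type*} [Mul A] [Star A] (e f : A) : Prop :=
  ∃ v, star v * v = e ∧ v * star v = f

/-- `A` is finite for projections: `e ≤ f`, `e ~ f` implies `e = f` for projections. -/
def FiniteForProjections (A : Type*) [Mul A] [Star A] [PartialOrder A] : Prop :=
  ∀ e f : A, IsProjectionElem e → IsProjectionElem f → e ≤ f → MvNEquiv e f → e = f

/-- `e` is the support projection of `a`: a projection lying in the (non-unital)
C*-subalgebra generated by `a` with `e * a = a`. -/
def IsSupportProjection {A : Type*} [NonUnitalCStarAlgebra A] (e a : A) : Prop :=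
  IsProjectionElem e ∧ e * a = a ∧
    e ∈ closure ((NonUnitalStarAlgebra.adjoin ℂ {a} : NonUnitalStarSubalgebra ℂ A) : Set A)

open Metric NonUnitalStarAlgebra

noncomputable def stepCutoff (s : ℝ) : ℝ := min 1 (max 0 (3 * s - 1))

noncomputable def invSqrtCutoff (s : ℝ) : ℝ := stepCutoff s / Real.sqrt (max s (1 / 2))

@[fun_prop]
lemma continuous_stepCutoff : Continuous stepCutoff := by
  unfold stepCutoff; fun_prop

@[fun_prop]
lemma continuous_invSqrtCutoff : Continuous invSqrtCutoff :=
  continuous_stepCutoff.div (by fun_prop) fun s ↦ by positivity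

@[simp] lemma stepCutoff_zero : stepCutoff 0 = 0 := by norm_num [stepCutoff]

@[simp] lemma invSqrtCutoff_zero : invSqrtCutoff 0 = 0 := by simp [invSqrtCutoff]

lemma stepCutoff_of_le {s : ℝ} (hs : s ≤ 1 / 3) : stepCutoff s = 0 := by
  rw [stepCutoff, max_eq_left (by linarith), min_eq_right zero_le_one]

lemma stepCutoff_of_ge {s : ℝ} (hs : 2 / 3 ≤ s) : stepCutoff s = 1 := by
  rw [stepCutoff, max_eq_right (by linarith), min_eq_left (by linarith)]

section NearZeroOrOne

variable {s η : ℝ} (hη : η ≤ 1 / 3) (hs : s ∈ closedBall 0 η ∪ closedBall 1 η)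
include hη hs

lemma stepCutoff_mul_self_of_mem : stepCutoff s * stepCutoff s = stepCutoff s := by
  rcases hs with hs | hs <;> rw [mem_closedBall, Real.dist_eq, abs_le] at hs
  · rw [stepCutoff_of_le (by linarith), mul_zero]
  · rw [stepCutoff_of_ge (by linarith), mul_one]

lemma abs_stepCutoff_sub_le_of_mem : |stepCutoff s - s| ≤ η := by
  rcases hs with hs | hs <;> rw [mem_closedBall, Real.dist_eq] at hs
  · rwa [stepCutoff_of_le (by linarith [(abs_le.1 hs).2]), zero_sub, abs_neg, ← sub_zero s]
  · rwa [stepCutoff_of_ge (by linarith [(abs_le.1 hs).1]), abs_sub_comm]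

lemma invSqrtCutoff_mul_mul_self_of_mem :
    invSqrtCutoff s * s * invSqrtCutoff s = stepCutoff s := by
  rcases hs with hs | hs <;> rw [mem_closedBall, Real.dist_eq, abs_le] at hs
  · simp [invSqrtCutoff, stepCutoff_of_le (show s ≤ 1 / 3 by linarith)]
  · have hs' : 2 / 3 ≤ s := by linarith
    rw [invSqrtCutoff, stepCutoff_of_ge hs', max_eq_left (by linarith)]
    field_simp
    rw [Real.sq_sqrt (by linarith)]

lemma abs_stepCutoff_sub_invSqrtCutoff_mul_self_le_of_mem :
    |stepCutoff s - invSqrtCutoff s * invSqrtCutoff s| ≤ 2 * η := by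
  rcases hs with hs | hs <;> rw [mem_closedBall, Real.dist_eq] at hs
  · simp [invSqrtCutoff, stepCutoff_of_le (show s ≤ 1 / 3 by linarith [(abs_le.1 hs).2])]
    linarith [abs_nonneg (s - 0)]
  · have hs' : 2 / 3 ≤ s := by linarith [(abs_le.1 hs).1]
    have hs0 : 0 < s := by linarith
    rw [invSqrtCutoff, stepCutoff_of_ge hs', max_eq_left (by linarith), div_mul_div_comm,
      Real.mul_self_sqrt hs0.le, one_mul, one_sub_div hs0.ne', abs_div, abs_of_pos hs0,
      div_le_iff₀ hs0]
    nlinarith [abs_nonneg (s - 1)]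

end NearZeroOrOne

lemma abs_le_or_abs_sub_one_le_of_abs_mul_self_sub_le {s C : ℝ} (h : |s * s - s| ≤ C) :
    |s| ≤ 2 * C ∨ |s - 1| ≤ 2 * C := by
  have hprod : |s| * |s - 1| ≤ C := by rwa [← abs_mul, mul_sub, mul_one]
  have hsum : 1 ≤ |s| + |s - 1| := by simpa using abs_sub s (s - 1)
  have hC : 0 ≤ C := (abs_nonneg _).trans h
  by_contra! hc
  rcases le_total |s| |s - 1| with hle | hle
  · nlinarith [mul_lt_mul_of_pos_right hc.1 (show 0 < |s - 1| by linarith),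
      mul_nonneg hC (show 0 ≤ |s - 1| - 1 / 2 by linarith)]
  · nlinarith [mul_lt_mul_of_pos_left hc.2 (show 0 < |s| by linarith),
      mul_nonneg hC (show 0 ≤ |s| - 1 / 2 by linarith)]

section CStarAlgebra

variable {A : Type*} [NonUnitalCStarAlgebra A]

lemma IsStarProjection.norm_mul_mul_self_le {p : A} (hp : IsStarProjection p) (x : A) :
    ‖p * x * p‖ ≤ ‖x‖ := by
  have hp1 := hp.norm_le
  calc ‖p * x * p‖ ≤ ‖p‖ * ‖x‖ * ‖p‖ := norm_mul₃_le
    _ ≤ 1 * ‖x‖ * 1 := by gcongr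
    _ = ‖x‖ := by ring

lemma IsStarProjection.eq_zero_of_norm_lt_one {p : A} (hp : IsStarProjection p) (h : ‖p‖ < 1) :
    p = 0 := by
  have hsq : ‖p‖ * ‖p‖ = ‖p‖ := by
    rw [← CStarRing.norm_star_mul_self, hp.isSelfAdjoint.star_eq, hp.isIdempotentElem.eq]
  exact norm_eq_zero.1 (by nlinarith [norm_nonneg p])

lemma IsStarProjection.eq_of_mul_eq_of_norm_sub_lt_one {e p : A} (he : IsStarProjection e)
    (hp : IsStarProjection p) (hpe : p * e = e) (h : ‖p - e‖ < 1) : e = p :=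
  (sub_eq_zero.1 ((he.sub_of_mul_eq_right hp hpe).eq_zero_of_norm_lt_one h)).symm

lemma norm_mul_self_sub_le_of_norm_sub_le {c p : A} {η : ℝ} (hp : IsStarProjection p)
    (h : ‖c - p‖ ≤ η) (hη : η ≤ 1) : ‖c * c - c‖ ≤ 4 * η := by
  have hc : ‖c‖ ≤ 2 := by linarith [norm_le_norm_add_norm_sub' c p, hp.norm_le]
  have hdecomp : c * c - c = c * (c - p) + (c - p) * p - (c - p) := by
    rw [mul_sub, sub_mul, hp.isIdempotentElem.eq]; abel
  calc ‖c * c - c‖ ≤ ‖c‖ * ‖c - p‖ + ‖c - p‖ * ‖p‖ + ‖c - p‖ := by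
        rw [hdecomp]
        refine (norm_sub_le _ _).trans (add_le_add ((norm_add_le _ _).trans
          (add_le_add (norm_mul_le _ _) (norm_mul_le _ _))) le_rfl)
    _ ≤ 2 * η + η * 1 + η := by
        gcongr
        · exact (norm_nonneg _).trans h
        · exact hp.norm_le
    _ = 4 * η := by ring

lemma IsSelfAdjoint.abs_mul_self_sub_le {c : A} (hc : IsSelfAdjoint c) {s : ℝ}
    (hs : s ∈ quasispectrum ℝ c) : |s * s - s| ≤ ‖c * c - c‖ := by
  have hcfc : cfcₙ (fun s : ℝ ↦ s * s - s) c = c * c - c := by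
    rw [cfcₙ_sub (fun s : ℝ ↦ s * s) (fun s ↦ s) c,
      cfcₙ_mul (fun s : ℝ ↦ s) (fun s ↦ s) c, cfcₙ_id' ℝ c]
  simpa [hcfc] using norm_apply_le_norm_cfcₙ (fun s : ℝ ↦ s * s - s) c hs

lemma IsSelfAdjoint.quasispectrum_subset_of_norm_sub_le {c p : A} {η : ℝ}
    (hc : IsSelfAdjoint c) (hp : IsStarProjection p) (h : ‖c - p‖ ≤ η) (hη : η ≤ 1) :
    quasispectrum ℝ c ⊆ closedBall 0 (8 * η) ∪ closedBall 1 (8 * η) := by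
  intro s hs
  have := abs_le_or_abs_sub_one_le_of_abs_mul_self_sub_le
    ((hc.abs_mul_self_sub_le hs).trans (norm_mul_self_sub_le_of_norm_sub_le hp h hη))
  rw [show 8 * η = 2 * (4 * η) by ring]
  simpa only [Set.mem_union, mem_closedBall, Real.dist_eq, sub_zero] using this

lemma isStarProjection_cfcₙ {f : ℝ → ℝ} {c : A}
    (hf : ∀ s ∈ quasispectrum ℝ c, f s * f s = f s)
    (hf_cont : ContinuousOn f (quasispectrum ℝ c) := by cfc_cont_tac)
    (hf0 : f 0 = 0 := by cfc_zero_tac) : IsStarProjection (cfcₙ f c) :=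
  ⟨by rw [IsIdempotentElem, ← cfcₙ_mul f f c]; exact cfcₙ_congr hf, cfcₙ_predicate f c⟩

lemma norm_cfcₙ_sub_cfcₙ_le {f g : ℝ → ℝ} {c : A} {η : ℝ}
    (h : ∀ s ∈ quasispectrum ℝ c, |f s - g s| ≤ η)
    (hf : ContinuousOn f (quasispectrum ℝ c) := by cfc_cont_tac)
    (hf0 : f 0 = 0 := by cfc_zero_tac)
    (hg : ContinuousOn g (quasispectrum ℝ c) := by cfc_cont_tac)
    (hg0 : g 0 = 0 := by cfc_zero_tac) : ‖cfcₙ f c - cfcₙ g c‖ ≤ η := by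
  rw [← cfcₙ_sub f g c]
  exact norm_cfcₙ_le h

lemma cfcₙ_mem_elemental_of_mem (f : ℝ → ℝ) {c d : A} (hd : d ∈ elemental ℂ c) :
    cfcₙ f d ∈ elemental ℂ c :=
  have := elemental.isClosed ℂ c
  cfcₙ_mem f hd

lemma isProjectionElem_iff_isStarProjection {e : A} : IsProjectionElem e ↔ IsStarProjection e :=
  isStarProjection_iff'.trans and_comm |>.symm

lemma mul_eq_self_and_self_mul_eq_of_mem_elemental {e c b : A} (he : IsSelfAdjoint e)
    (hc : IsSelfAdjoint c) (hec : e * c = c) (hb : b ∈ elemental ℂ c) :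
    e * b = b ∧ b * e = b := by
  have hce : c * e = c := by simpa [he.star_eq, hc.star_eq] using congr_arg star hec
  have hclosed : IsClosed {b : A | e * b = b ∧ b * e = b} :=
    (isClosed_eq (by fun_prop) continuous_id).inter (isClosed_eq (by fun_prop) continuous_id)
  refine closure_minimal (fun x hx ↦ ?_) hclosed hb
  induction hx using adjoin_induction with
  | mem x hx => obtain rfl := hx; exact ⟨hec, hce⟩
  | add x y _ _ hx hy => exact ⟨by rw [mul_add, hx.1, hy.1], by rw [add_mul, hx.2, hy.2]⟩
  | zero => exact ⟨mul_zero e, zero_mul e⟩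
  | mul x y _ _ hx hy => exact ⟨by rw [← mul_assoc, hx.1], by rw [mul_assoc, hy.2]⟩
  | smul r x _ hx => exact ⟨by rw [mul_smul_comm, hx.1], by rw [smul_mul_assoc, hx.2]⟩
  | star x _ hx =>
      have h₁ := congr_arg star hx.1
      have h₂ := congr_arg star hx.2
      rw [star_mul, he.star_eq] at h₁ h₂
      exact ⟨h₂, h₁⟩

lemma IsSupportProjection.eq {c e₁ e₂ : A} (hc : IsSelfAdjoint c)
    (h₁ : IsSupportProjection e₁ c) (h₂ : IsSupportProjection e₂ c) : e₁ = e₂ :=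
  calc e₁ = e₂ * e₁ :=
        (mul_eq_self_and_self_mul_eq_of_mem_elemental h₂.1.1 hc h₂.2.1 h₁.2.2).1.symm
    _ = e₂ := (mul_eq_self_and_self_mul_eq_of_mem_elemental h₁.1.1 hc h₁.2.1 h₂.2.2).2

lemma isSupportProjection_cfcₙ {f : ℝ → ℝ} {c : A} (hc : IsSelfAdjoint c)
    (hf : ∀ s ∈ quasispectrum ℝ c, s ≠ 0 → f s = 1)
    (hf_cont : ContinuousOn f (quasispectrum ℝ c) := by cfc_cont_tac)
    (hf0 : f 0 = 0 := by cfc_zero_tac) : IsSupportProjection (cfcₙ f c) c := by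
  have hfs : ∀ s ∈ quasispectrum ℝ c, f s * s = s := fun s hs ↦ by
    rcases eq_or_ne s 0 with rfl | h0
    · exact mul_zero _
    · rw [hf s hs h0, one_mul]
  refine ⟨isProjectionElem_iff_isStarProjection.2 (isStarProjection_cfcₙ fun s hs ↦ ?_), ?_,
    cfcₙ_mem_elemental_of_mem f (elemental.self_mem ℂ c)⟩
  · rcases eq_or_ne s 0 with rfl | h0
    · rw [hf0, mul_zero]
    · rw [hf s hs h0, mul_one]
  · conv_rhs => rw [← cfcₙ_id' ℝ c, ← cfcₙ_congr hfs]
    rw [cfcₙ_mul f (fun s ↦ s) c, cfcₙ_id' ℝ c]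

lemma isStarProjection_cfcₙ_stepCutoff {c : A} {η : ℝ}
    (hσ : quasispectrum ℝ c ⊆ closedBall 0 η ∪ closedBall 1 η) (hη : η ≤ 1 / 3) :
    IsStarProjection (cfcₙ stepCutoff c) :=
  isStarProjection_cfcₙ (fun s hs ↦ stepCutoff_mul_self_of_mem hη (hσ hs))
    continuous_stepCutoff.continuousOn

lemma norm_cfcₙ_stepCutoff_sub_le {c : A} {η : ℝ} (hc : IsSelfAdjoint c)
    (hσ : quasispectrum ℝ c ⊆ closedBall 0 η ∪ closedBall 1 η) (hη : η ≤ 1 / 3) :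
    ‖cfcₙ stepCutoff c - c‖ ≤ η := by
  simpa [cfcₙ_id' ℝ c] using norm_cfcₙ_sub_cfcₙ_le (g := fun s ↦ s)
    (fun s hs ↦ abs_stepCutoff_sub_le_of_mem hη (hσ hs)) continuous_stepCutoff.continuousOn

/-- `cfcₙ stepCutoff t` is a subprojection of `p` at distance less than `1` from `p`. -/
lemma cfcₙ_stepCutoff_eq_of_norm_sub_le {p t : A} {η : ℝ} (hp : IsStarProjection p)
    (ht : IsSelfAdjoint t) (hpt : p * t = t) (h : ‖t - p‖ ≤ η) (hη : η ≤ 1 / 24) :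
    cfcₙ stepCutoff t = p := by
  have hσ := ht.quasispectrum_subset_of_norm_sub_le hp h (by linarith)
  have he := isStarProjection_cfcₙ_stepCutoff hσ (by linarith)
  refine he.eq_of_mul_eq_of_norm_sub_lt_one hp (mul_eq_self_and_self_mul_eq_of_mem_elemental
    hp.isSelfAdjoint ht hpt (cfcₙ_mem_elemental_of_mem _ (elemental.self_mem ℂ t))).1 ?_
  rw [norm_sub_rev]
  calc ‖cfcₙ stepCutoff t - p‖ ≤ ‖cfcₙ stepCutoff t - t‖ + ‖t - p‖ :=
        norm_sub_le_norm_sub_add_norm_sub _ _ _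
    _ ≤ 8 * η + η := add_le_add (norm_cfcₙ_stepCutoff_sub_le ht hσ (by linarith)) h
    _ < 1 := by linarith

lemma MvNEquiv.symm {e f : A} (h : MvNEquiv e f) : MvNEquiv f e :=
  let ⟨v, hv₁, hv₂⟩ := h
  ⟨star v, by rw [star_star, hv₂], by rw [star_star, hv₁]⟩

lemma MvNEquiv.trans {e f g : A} (he : IsIdempotentElem e) (hg : IsIdempotentElem g)
    (h₁ : MvNEquiv e f) (h₂ : MvNEquiv f g) : MvNEquiv e g := by
  obtain ⟨v, rfl, rfl⟩ := h₁
  obtain ⟨w, hw, rfl⟩ := h₂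
  refine ⟨w * v, ?_, ?_⟩
  · calc star (w * v) * (w * v) = star v * (star w * w) * v := by
          simp only [star_mul, mul_assoc]
      _ = (star v * v) * (star v * v) := by rw [hw]; simp only [mul_assoc]
      _ = star v * v := he.eq
  · calc w * v * star (w * v) = w * (v * star v) * star w := by
          simp only [star_mul, mul_assoc]
      _ = (w * star w) * (w * star w) := by rw [← hw]; simp only [mul_assoc]
      _ = w * star w := hg.eq

/-- With `t = p q p` and `G = t^{-1/2}` on the range of `p`, the partial isometry `q G` has
initial projection `p` and a final projection under `q` and close to it. -/
lemma mvnEquiv_of_norm_sub_le {p q : A} (hp : IsStarProjection p) (hq : IsStarProjection q)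
    (hpq : ‖p - q‖ ≤ 1 / 24) : MvNEquiv p q := by
  set t := p * q * p with ht_def
  have ht : IsSelfAdjoint t := hq.isSelfAdjoint.conjugate_self hp.isSelfAdjoint
  have hpt : p * t = t := by rw [← mul_assoc, ← mul_assoc, hp.isIdempotentElem.eq]
  have htp : ‖t - p‖ ≤ ‖p - q‖ := by
    have : t - p = p * (q - p) * p := by
      rw [mul_sub, sub_mul, hp.isIdempotentElem.eq, hp.isIdempotentElem.eq]
    rw [this, norm_sub_rev p q]
    exact hp.norm_mul_mul_self_le _
  have hσ := ht.quasispectrum_subset_of_norm_sub_le hp htp (by linarith)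
  have hk : cfcₙ stepCutoff t = p := cfcₙ_stepCutoff_eq_of_norm_sub_le hp ht hpt htp hpq
  set G := cfcₙ invSqrtCutoff t
  have hG : IsSelfAdjoint G := cfcₙ_predicate _ _
  have hpG := mul_eq_self_and_self_mul_eq_of_mem_elemental hp.isSelfAdjoint ht hpt
    (cfcₙ_mem_elemental_of_mem invSqrtCutoff (elemental.self_mem ℂ t))
  have hGtG : G * t * G = p := by
    rw [← hk, ← cfcₙ_congr fun s hs ↦
        invSqrtCutoff_mul_mul_self_of_mem (by linarith) (hσ hs),
      cfcₙ_mul _ invSqrtCutoff t, cfcₙ_mul invSqrtCutoff (fun s ↦ s) t, cfcₙ_id' ℝ t]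
  have hpGG : ‖p - G * G‖ ≤ 16 * ‖p - q‖ := by
    calc ‖p - G * G‖
        = ‖cfcₙ stepCutoff t - cfcₙ (fun s ↦ invSqrtCutoff s * invSqrtCutoff s) t‖ := by
          rw [hk, cfcₙ_mul invSqrtCutoff invSqrtCutoff t]
      _ ≤ 2 * (8 * ‖p - q‖) := norm_cfcₙ_sub_cfcₙ_le fun s hs ↦
          abs_stepCutoff_sub_invSqrtCutoff_mul_self_le_of_mem (by linarith) (hσ hs)
      _ = 16 * ‖p - q‖ := by ring
  have hstar : star (q * G) = G * q := by rw [star_mul, hG.star_eq, hq.isSelfAdjoint.star_eq]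
  have hinit : star (q * G) * (q * G) = p := by
    calc star (q * G) * (q * G) = (G * p) * q * (p * G) := by
          rw [hstar, hpG.1, hpG.2, mul_assoc G q, ← mul_assoc q q, hq.isIdempotentElem.eq,
            mul_assoc]
      _ = G * t * G := by rw [ht_def]; simp only [mul_assoc]
      _ = p := hGtG
  refine ⟨q * G, hinit, ?_⟩
  have hfin : IsStarProjection (q * G * star (q * G)) :=
    ⟨isIdempotentElem_star_mul_self_iff_isIdempotentElem_self_mul_star.1
      (hinit ▸ hp.isIdempotentElem), .mul_star_self _⟩
  refine hfin.eq_of_mul_eq_of_norm_sub_lt_one hq ?_ ?_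
  · rw [← mul_assoc, ← mul_assoc, hq.isIdempotentElem.eq]
  · have : q - q * G * star (q * G) = q * (q - G * G) * q := by
      rw [hstar, mul_sub, sub_mul, hq.isIdempotentElem.eq, hq.isIdempotentElem.eq]
      simp only [mul_assoc]
    rw [this]
    calc ‖q * (q - G * G) * q‖ ≤ ‖q - G * G‖ := hq.norm_mul_mul_self_le _
      _ ≤ ‖q - p‖ + ‖p - G * G‖ := norm_sub_le_norm_sub_add_norm_sub _ _ _
      _ ≤ ‖p - q‖ + 16 * ‖p - q‖ := by rw [norm_sub_rev q]; exact add_le_add le_rfl hpGG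
      _ < 1 := by linarith

/-- The spectral projection `q = cfcₙ stepCutoff d` lies under `e` and is close to `p ~ e`,
hence `q ~ e`, and finiteness gives `q = e`. -/
lemma FiniteForProjections.norm_sub_le [PartialOrder A] [StarOrderedRing A]
    (hfin : FiniteForProjections A) {c d e p : A} {η : ℝ} (hc : IsSelfAdjoint c)
    (he : IsSupportProjection e c) (hp : IsStarProjection p) (hep : MvNEquiv e p)
    (hd : IsSelfAdjoint d) (hdc : d ∈ elemental ℂ c) (h : ‖d - p‖ ≤ η)
    (hη : η ≤ 1 / 216) : ‖e - p‖ ≤ 9 * η := by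
  have he' : IsStarProjection e := isProjectionElem_iff_isStarProjection.1 he.1
  have hσ := hd.quasispectrum_subset_of_norm_sub_le hp h (by linarith)
  have hq := isStarProjection_cfcₙ_stepCutoff hσ (by linarith)
  have hqp : ‖cfcₙ stepCutoff d - p‖ ≤ 9 * η :=
    calc ‖cfcₙ stepCutoff d - p‖ ≤ ‖cfcₙ stepCutoff d - d‖ + ‖d - p‖ :=
          norm_sub_le_norm_sub_add_norm_sub _ _ _
      _ ≤ 8 * η + η := add_le_add (norm_cfcₙ_stepCutoff_sub_le hd hσ (by linarith)) h
      _ = 9 * η := by ring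
  have hqe : cfcₙ stepCutoff d ≤ e :=
    (hq.le_iff_mul_eq_right he').2 (mul_eq_self_and_self_mul_eq_of_mem_elemental
      he'.isSelfAdjoint hc he.2.1 (cfcₙ_mem_elemental_of_mem _ hdc)).1
  have hmvn : MvNEquiv (cfcₙ stepCutoff d) e :=
    (mvnEquiv_of_norm_sub_le hq hp (by linarith)).trans hq.isIdempotentElem he'.isIdempotentElem
      hep.symm
  rwa [← hfin _ _ (isProjectionElem_iff_isStarProjection.2 hq) he.1 hqe hmvn]

end CStarAlgebra

lemma ZeroAtInftyContinuousMap.cfcₙ_apply {X A : Type*} [TopologicalSpace X]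
    [NonUnitalCStarAlgebra A] {f : ℝ → ℝ} (hf : Continuous f) {a : C₀(X, A)}
    (ha : IsSelfAdjoint a) (x : X) : cfcₙ f a x = cfcₙ f (a x) := by
  by_cases hf0 : f 0 = 0
  · let φ : C₀(X, A) →⋆ₙₐ[ℂ] A :=
      { toFun g := g x
        map_smul' _ _ := rfl
        map_zero' := rfl
        map_add' _ _ := rfl
        map_mul' _ _ := rfl
        map_star' _ := rfl }
    have hφ : Continuous φ :=
      (continuous_eval_const x).comp ZeroAtInftyContinuousMap.isometry_toBCF.continuous
    exact φ.map_cfcₙ f a hf.continuousOn hf0 hφ ha (ha.map φ)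
  · simp [cfcₙ_apply_of_not_map_zero _ hf0]

theorem stmt_5_general {X : Type*} [TopologicalSpace X]
    {A : Type*} [NonUnitalCStarAlgebra A] [PartialOrder A] [StarOrderedRing A]
    (hfin : FiniteForProjections A)
    (a : C₀(X, A)) (ha : ∀ x, 0 ≤ a x)
    (hspec : ∀ x, ∃ δ > (0 : ℝ), quasispectrum ℝ (a x) ⊆ {0} ∪ Set.Ici δ)
    (P : X → A) (hP : ∀ x, IsSupportProjection (P x) (a x))
    (hloc : ∀ x, ∃ V ∈ nhds x, ∀ y ∈ V, MvNEquiv (P y) (P x)) :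
    Continuous P := by
  have ha' : ∀ x, IsSelfAdjoint (a x) := fun x ↦ .of_nonneg (ha x)
  have haC : IsSelfAdjoint a := ZeroAtInftyContinuousMap.ext fun x ↦ (ha' x).star_eq
  refine continuous_iff_continuousAt.2 fun x ↦ Metric.tendsto_nhds.2 fun ε hε ↦ ?_
  obtain ⟨δ, hδ, hσ⟩ := hspec x
  obtain ⟨V, hV, hVP⟩ := hloc x
  set b := cfcₙ (fun s ↦ stepCutoff (s / δ)) a
  have hb : ∀ y, b y = cfcₙ (fun s ↦ stepCutoff (s / δ)) (a y) :=
    ZeroAtInftyContinuousMap.cfcₙ_apply (by fun_prop) haC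
  have hbx : IsSupportProjection (b x) (a x) := by
    rw [hb x]
    refine isSupportProjection_cfcₙ (ha' x) fun s hs hs0 ↦ stepCutoff_of_ge ?_
    have : δ ≤ s := (hσ hs).resolve_left hs0
    rw [le_div_iff₀ hδ]
    linarith
  have hPx : P x = b x := (hP x).eq (ha' x) hbx
  set η := min (ε / 10) (1 / 216)
  filter_upwards [Metric.tendsto_nhds.1 (b.continuous.tendsto x) η (by positivity),
    Filter.eventually_of_mem hV hVP] with y hby hPy
  rw [dist_eq_norm] at hby ⊢
  calc ‖P y - P x‖ ≤ 9 * η := hfin.norm_sub_le (ha' y) (hP y)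
        (isProjectionElem_iff_isStarProjection.1 (hP x).1) hPy (hb y ▸ cfcₙ_predicate _ _)
        (hb y ▸ cfcₙ_mem_elemental_of_mem _ (elemental.self_mem ℂ _)) (hPx ▸ hby.le)
        (min_le_right _ _)
    _ < ε := by linarith [min_le_left (ε / 10) (1 / 216)]

/-- If `a` is a positive element of `C₀(X, A)` (`X` second countable locally compact
Hausdorff, `A` separable and finite for projections) whose values have spectrum in
`{0} ∪ [δ, ∞)` and whose support projections `P x = χ(a(x))` have locally constant
Murray–von Neumann class, then `P` is continuous. -/
theorem stmt_5 {X : Type*} [TopologicalSpace X] [SecondCountableTopology X]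
    [LocallyCompactSpace X] [T2Space X]
    {A : Type*} [NonUnitalCStarAlgebra A] [PartialOrder A] [StarOrderedRing A]
    [TopologicalSpace.SeparableSpace A]
    (hfin : FiniteForProjections A)
    (a : C₀(X, A)) (ha : ∀ x, 0 ≤ a x)
    (hspec : ∀ x, ∃ δ > (0 : ℝ), quasispectrum ℝ (a x) ⊆ {0} ∪ Set.Ici δ)
    (P : X → A) (hP : ∀ x, IsSupportProjection (P x) (a x))
    (hloc : ∀ x, ∃ V ∈ nhds x, ∀ y ∈ V, MvNEquiv (P y) (P x)) :
    Continuous P :=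
  stmt_5_general hfin a ha hspec P hP hloc
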